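/- arXiv:2305.05365 — 2 statements merged into one kernel-verified Lean document; each statement's English description precedes it below -/
import Mathlib

section
/- Let G be a simple graph on [n] and let m ≥ 2. Then the generalized binomial edge ideal J_{K_m,G} in S = K[x_{ij} : i ∈ [m], j ∈ [n]] equals the intersection over all T ∈ C(G) of the prime ideals P_T(K_m,G); in particular J_{K_m,G} is a radical ideal. -/
open MvPolynomial

noncomputable section


/-- The generalized binomial edge ideal `J_{K_m, G}` of a simple graph `G` on vertex set `V`,
inside `K[x_{ij} : i ∈ [m], j ∈ V]`. -/
def genBEI (K : Type) [Field K] (m : ℕ) {V : Type} (G : SimpleGraph V) :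
    Ideal (MvPolynomial (Fin m × V) K) :=
  Ideal.span {f | ∃ (i j : Fin m) (t l : V), i ≠ j ∧ G.Adj t l ∧
    f = X (i, t) * X (j, l) - X (i, l) * X (j, t)}

/-- The graded maximal (irrelevant) ideal of the polynomial ring, generated by all variables. -/
def irrelIdeal (K : Type) [Field K] (ι : Type) : Ideal (MvPolynomial ι K) :=
  Ideal.span (Set.range X)

/-- The depth of a module, defined as `min { i : H^i_I(M) ≠ 0 }` via local cohomology. -/
def lcDepth {R : Type} [CommRing R] (I : Ideal R) (M : ModuleCat R) : ℕ∞ :=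
  sInf {i : ℕ∞ | ∃ j : ℕ, (j : ℕ∞) = i ∧ Nontrivial ((localCohomology I j).obj M)}

/-- Depth of `S/J` over `S`, with respect to the graded maximal ideal. -/
def depthQ (K : Type) [Field K] {ι : Type} (J : Ideal (MvPolynomial ι K)) : ℕ∞ :=
  lcDepth (irrelIdeal K ι) (ModuleCat.of (MvPolynomial ι K) (MvPolynomial ι K ⧸ J))

/-- Term of the Koszul complex of a module `M` w.r.t. the variables of the polynomial ring. -/
abbrev kosT (ι : Type) (M : Type) (i : ℕ) := ({s : Finset ι // s.card = i}) → M

/-- The Koszul differential. -/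
def kosD (K : Type) [Field K] {ι : Type} [Fintype ι] [DecidableEq ι]
    {M : Type} [AddCommGroup M] [Module (MvPolynomial ι K) M] (i : ℕ) :
    kosT ι M (i + 1) →ₗ[MvPolynomial ι K] kosT ι M i :=
  LinearMap.pi fun t => ∑ a : ι,
    if h : a ∈ (t : Finset ι) then 0 else
      ((-1 : ℤ) ^ (((t : Finset ι).filter
          fun b => (Fintype.equivFin ι) b < (Fintype.equivFin ι) a).card)) •
        ((LinearMap.lsmul (MvPolynomial ι K) M (X a)).comp
          (LinearMap.proj (⟨insert a (t : Finset ι), by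
            rw [Finset.card_insert_of_notMem h, t.2]⟩ : {s : Finset ι // s.card = i + 1})))

/-- Nonvanishing of the internal-degree-`j` part of the `i`-th Koszul homology of a
graded module (with grading `gr`): there is a cycle all of whose components are homogeneous
of the appropriate degree that is not a boundary.  For finitely generated graded modules this
is equivalent to the graded Betti number `β_{i,j}(M)` being nonzero. -/
def kosHomNonzero (K : Type) [Field K] {ι : Type} [Fintype ι] [DecidableEq ι]
    {M : Type} [AddCommGroup M] [Module (MvPolynomial ι K) M]
    (gr : ℤ → Set M) (i : ℕ) (j : ℤ) : Prop :=
  match i with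
  | 0 => ∃ z : kosT ι M 0, (∀ s, z s ∈ gr j) ∧ z ∉ Set.range (kosD K (M := M) 0)
  | (i' + 1) => ∃ z : kosT ι M (i' + 1), z ∈ LinearMap.ker (kosD K (M := M) i') ∧
      (∀ s, z s ∈ gr (j - (i' + 1))) ∧ z ∉ Set.range (kosD K (M := M) (i' + 1))

/-- The Castelnuovo–Mumford regularity of a graded module (with grading `gr`), via the
standard characterization `reg M = max { j - i : β_{i,j}(M) ≠ 0 }` through Koszul homology.
The value `⊥ = -∞` occurs exactly for the zero module. -/
def kosReg (K : Type) [Field K] {ι : Type} [Fintype ι] [DecidableEq ι]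
    {M : Type} [AddCommGroup M] [Module (MvPolynomial ι K) M] (gr : ℤ → Set M) : EReal :=
  sSup {r : EReal | ∃ (i : ℕ) (j : ℤ), kosHomNonzero (ι := ι) K gr i j ∧ r = (((j - i : ℤ) : ℝ) : EReal)}

/-- The standard grading on `S/J` induced by the standard grading of the polynomial ring. -/
def stdGrading (K : Type) [Field K] {ι : Type} (J : Ideal (MvPolynomial ι K)) :
    ℤ → Set (MvPolynomial ι K ⧸ J) :=
  fun d => if 0 ≤ d then
    (Ideal.Quotient.mk J) '' (homogeneousSubmodule ι K d.toNat : Set (MvPolynomial ι K))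
  else {0}

/-- Castelnuovo–Mumford regularity of `S/J` for a homogeneous ideal `J`. -/
def regQ (K : Type) [Field K] {ι : Type} [Fintype ι] [DecidableEq ι]
    (J : Ideal (MvPolynomial ι K)) : EReal :=
  kosReg (ι := ι) (M := MvPolynomial ι K ⧸ J) K (stdGrading K J)



/-- A vertex `v` is a leaf (free vertex) if it has exactly one neighbor. -/
def IsLeafVert {V : Type} (G : SimpleGraph V) (v : V) : Prop := ∃! u, G.Adj v u

/-- Number of connected components of the induced subgraph `G ∖ T`. -/
def numComp {V : Type} (G : SimpleGraph V) (T : Finset V) : ℕ :=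
  Nat.card (G.induce {v : V | v ∉ T}).ConnectedComponent

/-- `T` has the cut point property: every `v ∈ T` is a cut vertex of `G ∖ (T ∖ {v})`. -/
def hasCutPointProperty {V : Type} [DecidableEq V] (G : SimpleGraph V) (T : Finset V) : Prop :=
  ∀ v ∈ T, numComp G (T.erase v) < numComp G T

/-- The collection `𝒞(G)` : the empty set together with all sets with the cut point property. -/
def cutSets {V : Type} [DecidableEq V] (G : SimpleGraph V) : Set (Finset V) :=
  {T | T = ∅ ∨ hasCutPointProperty G T}

/-- The prime ideal `P_T(K_m, G)`. -/
def PTIdeal (K : Type) [Field K] (m : ℕ) {V : Type} (G : SimpleGraph V) (T : Finset V) :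
    Ideal (MvPolynomial (Fin m × V) K) :=
  Ideal.span ({f | ∃ (i : Fin m) (j : V), j ∈ T ∧ f = X (i, j)} ∪
    {f | ∃ (i j : Fin m) (t l : V) (ht : t ∉ T) (hl : l ∉ T), i ≠ j ∧ t ≠ l ∧
      (G.induce {v : V | v ∉ T}).Reachable ⟨t, ht⟩ ⟨l, hl⟩ ∧
      f = X (i, t) * X (j, l) - X (i, l) * X (j, t)})

/-- The graph `G_v`, obtained from `G` by adding all edges between neighbors of `v`. -/
def addNbhdClique {V : Type} (G : SimpleGraph V) (v : V) : SimpleGraph V :=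
  G ⊔ SimpleGraph.fromRel (fun a b => G.Adj v a ∧ G.Adj v b)

/-- The graph `G ∖ v` (kept on the same vertex set, with `v` isolated). -/
def delVert {V : Type} (G : SimpleGraph V) (v : V) : SimpleGraph V :=
  SimpleGraph.fromRel (fun a b => G.Adj a b ∧ a ≠ v ∧ b ≠ v)

/-- Number of maximal cliques of `G`. -/
def maxCliqueCount {V : Type} (G : SimpleGraph V) : ℕ :=
  Nat.card {A : Set V // G.IsClique A ∧ ∀ B : Set V, G.IsClique B → A ⊆ B → B = A}

/-! ### Fan graphs -/

/-- Vertex set of the fan graph `F_k^W(K_n)`: the `n` vertices of `K_n` together with,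
for each branch graph `K_{a_{i,j}}`, its `h i j = a_{i,j} - j` new vertices. -/
def fanV (n k : ℕ) (r : Fin k → ℕ) (h : (i : Fin k) → Fin (r i) → ℕ) : Type :=
  Fin n ⊕ ((i : Fin k) × (j : Fin (r i)) × Fin (h i j))

instance (n k : ℕ) (r : Fin k → ℕ) (h : (i : Fin k) → Fin (r i) → ℕ) :
    Fintype (fanV n k r h) := by unfold fanV; infer_instance

instance (n k : ℕ) (r : Fin k → ℕ) (h : (i : Fin k) → Fin (r i) → ℕ) :
    DecidableEq (fanV n k r h) := by unfold fanV; infer_instance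

/-- The fan graph `F_k^W(K_n)`, where `W = W_1 ⊔ ⋯ ⊔ W_k`, `W_i = {w i 0, …, w i (r i - 1)}`
and the branch `K_{a_{i,j}}` on `W_i` has `h i j` new vertices and contains
`w i 0, …, w i j` among the vertices of `K_n`. -/
def fanG (n k : ℕ) (r : Fin k → ℕ) (w : (i : Fin k) → Fin (r i) → Fin n)
    (h : (i : Fin k) → Fin (r i) → ℕ) : SimpleGraph (fanV n k r h) :=
  SimpleGraph.fromRel fun u v =>
    match u, v with
    | Sum.inl _, Sum.inl _ => True
    | Sum.inl a, Sum.inr ⟨i, j, _⟩ => ∃ j' : Fin (r i), (j' : ℕ) ≤ (j : ℕ) ∧ w i j' = a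
    | Sum.inr ⟨i, j, _⟩, Sum.inr ⟨i', j', _⟩ => i = i' ∧ (j : ℕ) = (j' : ℕ)
    | Sum.inr _, Sum.inl _ => False

/-- The bipartite graph `F_p` on `[2p]`, with edges `{2i, 2j-1}` for `1 ≤ i ≤ j ≤ p`
(vertex labelled `ℓ` corresponds to `⟨ℓ-1, _⟩ : Fin (2*p)`). -/
def FpG (p : ℕ) : SimpleGraph (Fin (2 * p)) :=
  SimpleGraph.fromRel fun a b => ∃ i j : ℕ, 1 ≤ i ∧ i ≤ j ∧ j ≤ p ∧
    (a : ℕ) = 2 * i - 1 ∧ (b : ℕ) = 2 * j - 2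

/-! ### The `*` and `∘` operations -/

/-- Vertex set of `G₁ * G₂`: the leaves `f₁, f₂` get identified (with `f₁` as representative). -/
def starV (V₁ V₂ : Type) (f₂ : V₂) : Type := V₁ ⊕ {x : V₂ // x ≠ f₂}

instance (V₁ V₂ : Type) [Fintype V₁] [Fintype V₂] [DecidableEq V₂] (f₂ : V₂) :
    Fintype (starV V₁ V₂ f₂) := by unfold starV; infer_instance

instance (V₁ V₂ : Type) [DecidableEq V₁] [DecidableEq V₂] (f₂ : V₂) :
    DecidableEq (starV V₁ V₂ f₂) := by unfold starV; infer_instance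

/-- The graph `(G₁, f₁) * (G₂, f₂)`, obtained by identifying the leaf `f₁` of `G₁`
with the leaf `f₂` of `G₂`. -/
def starG {V₁ V₂ : Type} (G₁ : SimpleGraph V₁) (G₂ : SimpleGraph V₂) (f₁ : V₁) (f₂ : V₂) :
    SimpleGraph (starV V₁ V₂ f₂) :=
  SimpleGraph.fromRel fun u v =>
    match u, v with
    | Sum.inl a, Sum.inl b => G₁.Adj a b
    | Sum.inr x, Sum.inr y => G₂.Adj x.1 y.1
    | Sum.inl a, Sum.inr x => a = f₁ ∧ G₂.Adj f₂ x.1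
    | Sum.inr _, Sum.inl _ => False

/-- Vertex set of `G₁ ∘ G₂`: the leaves `f₁, f₂` are removed and the neighbors `v₁, v₂`
get identified (with `v₁` as representative). -/
def circV (V₁ V₂ : Type) (f₁ : V₁) (f₂ : V₂) (v₂ : V₂) : Type :=
  {x : V₁ // x ≠ f₁} ⊕ {x : V₂ // x ≠ f₂ ∧ x ≠ v₂}

instance (V₁ V₂ : Type) [Fintype V₁] [Fintype V₂] [DecidableEq V₁] [DecidableEq V₂]
    (f₁ : V₁) (f₂ : V₂) (v₂ : V₂) : Fintype (circV V₁ V₂ f₁ f₂ v₂) := by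
  unfold circV; infer_instance

instance (V₁ V₂ : Type) [DecidableEq V₁] [DecidableEq V₂] (f₁ : V₁) (f₂ : V₂) (v₂ : V₂) :
    DecidableEq (circV V₁ V₂ f₁ f₂ v₂) := by unfold circV; infer_instance

/-- The graph `(G₁, f₁) ∘ (G₂, f₂)`, obtained by deleting the leaves `f₁, f₂` and identifying
their neighbors `v₁` and `v₂`. -/
def circG {V₁ V₂ : Type} (G₁ : SimpleGraph V₁) (G₂ : SimpleGraph V₂)
    (f₁ : V₁) (v₁ : V₁) (f₂ : V₂) (v₂ : V₂) : SimpleGraph (circV V₁ V₂ f₁ f₂ v₂) :=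
  SimpleGraph.fromRel fun u v =>
    match u, v with
    | Sum.inl a, Sum.inl b => G₁.Adj a.1 b.1
    | Sum.inr x, Sum.inr y => G₂.Adj x.1 y.1
    | Sum.inl a, Sum.inr x => a.1 = v₁ ∧ G₂.Adj v₂ x.1
    | Sum.inr _, Sum.inl _ => False


/-!
Modulo the variables of the columns in `T`, the ideal `P_T` is the kernel of the monomial map
`x_{ij} ↦ y_{i,C(j)} z_j`, where `C(j)` is the component of `j` in `G ∖ T`; a straightening argument
shows that this kernel is generated by the minors `[i,k|j,l]` with `C(j) = C(l)`, so `P_T` is prime.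
If `v ∈ T` is not a cut point of `G ∖ (T ∖ {v})` then `P_{T ∖ {v}} ⊆ P_T`, so the intersection over
`𝒞(G)` is the intersection over all `T`. That intersection lies in `J_G` by induction on the number
of non-isolated vertices and then of non-edges: if every neighbourhood is a clique, the components
of `G` are complete and `P_∅ = J_G`; otherwise Ohtani's lemma for a vertex `v` with a non-complete
neighbourhood reduces to `G_v` and `G ∖ v`.
-/

namespace GenBEI

open SimpleGraph

section ZeroVars

variable {σ R : Type*} [CommRing R] (Z : Set σ) [DecidablePred (· ∈ Z)]

def zeroVars : MvPolynomial σ R →ₐ[R] MvPolynomial σ R :=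
  aeval fun p => if p ∈ Z then 0 else X p

variable {Z}

lemma zeroVars_X (p : σ) :
    zeroVars Z (X p : MvPolynomial σ R) = if p ∈ Z then 0 else X p := by
  simp [zeroVars]

lemma sub_zeroVars_mem (f : MvPolynomial σ R) : f - zeroVars Z f ∈ Ideal.span (X '' Z) := by
  induction f using MvPolynomial.induction_on with
  | C a => simp [zeroVars]
  | add p q hp hq => simpa only [map_add, add_sub_add_comm] using add_mem hp hq
  | mul_X p s hp =>
    rw [map_mul, zeroVars_X]
    split_ifs with hs
    · rw [mul_zero, sub_zero]
      exact Ideal.mul_mem_left _ _ (Ideal.subset_span ⟨s, hs, rfl⟩)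
    · rw [← sub_mul]
      exact Ideal.mul_mem_right _ _ hp

end ZeroVars

section MonomialMap

variable {σ τ R : Type*} [CommRing R]

def monomialMap (w : σ → τ →₀ ℕ) : MvPolynomial σ R →ₐ[R] MvPolynomial τ R :=
  AddMonoidAlgebra.mapDomainAlgHom R R (Finsupp.linearCombination ℕ w).toAddMonoidHom

lemma monomialMap_apply (w : σ → τ →₀ ℕ) (f : MvPolynomial σ R) :
    monomialMap w f = AddMonoidAlgebra.mapDomain (Finsupp.linearCombination ℕ w) f := rfl

lemma monomialMap_monomial (w : σ → τ →₀ ℕ) (μ : σ →₀ ℕ) (a : R) :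
    monomialMap w (monomial μ a) = monomial (Finsupp.linearCombination ℕ w μ) a := by
  simp [monomialMap_apply, ← single_eq_monomial]

lemma monomialMap_X (w : σ → τ →₀ ℕ) (p : σ) :
    monomialMap w (X p : MvPolynomial σ R) = monomial (w p) 1 := by
  simp [X, monomialMap_monomial]

lemma sub_mapDomain_mem {I : Ideal (MvPolynomial σ R)} {g : (σ →₀ ℕ) → σ →₀ ℕ}
    (hg : ∀ μ, monomial μ (1 : R) - monomial (g μ) 1 ∈ I) (f : MvPolynomial σ R) :
    f - AddMonoidAlgebra.mapDomain g f ∈ I := by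
  induction f using MvPolynomial.induction_on' with
  | monomial μ a =>
    rw [← single_eq_monomial, AddMonoidAlgebra.mapDomain_single, single_eq_monomial,
      single_eq_monomial, ← mul_one a, ← C_mul_monomial, ← C_mul_monomial, ← mul_sub]
    exact I.mul_mem_left _ (hg μ)
  | add p q hp hq =>
    simpa only [AddMonoidAlgebra.mapDomain_add, add_sub_add_comm] using add_mem hp hq

theorem ker_monomialMap_le {w : σ → τ →₀ ℕ} {I : Ideal (MvPolynomial σ R)}
    (hI : ∀ μ ν, Finsupp.linearCombination ℕ w μ = Finsupp.linearCombination ℕ w ν →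
      monomial μ (1 : R) - monomial ν 1 ∈ I) :
    RingHom.ker (monomialMap (R := R) w) ≤ I := by
  intro f hf
  set E := Finsupp.linearCombination ℕ w
  -- Modulo `I`, `f` equals its image under `μ ↦ κ (E μ)`, which factors through `E`.
  set κ := Function.invFun E
  have hκ : ∀ μ, E (κ (E μ)) = E μ := fun μ => Function.invFun_eq ⟨μ, rfl⟩
  have hfib : AddMonoidAlgebra.mapDomain (κ ∘ E) f = 0 := by
    have hEf : Finsupp.mapDomain E (AddMonoidAlgebra.coeff f) = 0 := by
      simpa using congrArg AddMonoidAlgebra.coeff (show AddMonoidAlgebra.mapDomain E f = 0 from hf)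
    apply AddMonoidAlgebra.coeff_injective
    simp only [AddMonoidAlgebra.coeff_mapDomain, Finsupp.mapDomain_comp, hEf,
      Finsupp.mapDomain_zero, AddMonoidAlgebra.coeff_zero]
  have key := sub_mapDomain_mem (g := κ ∘ E) (fun μ => hI μ (κ (E μ)) (hκ μ).symm) f
  rwa [hfib, sub_zero] at key

end MonomialMap


section Finsupp

variable {σ τ : Type*}

lemma exists_eq_single_add {μ : σ →₀ ℕ} {p : σ} (h : μ p ≠ 0) :
    ∃ μ', μ = Finsupp.single p 1 + μ' :=
  exists_add_of_le (Finsupp.single_le_iff.mpr (Nat.one_le_iff_ne_zero.mpr h))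

lemma exists_ne_zero_of_linearCombination_apply_ne_zero {w : σ → τ →₀ ℕ} {μ : σ →₀ ℕ} {a : τ}
    (h : Finsupp.linearCombination ℕ w μ a ≠ 0) : ∃ p, μ p ≠ 0 ∧ w p a ≠ 0 := by
  rw [Finsupp.linearCombination_apply, Finsupp.sum, Finsupp.finsetSum_apply] at h
  obtain ⟨p, hp, hpa⟩ := Finset.exists_ne_zero_of_sum_ne_zero h
  exact ⟨p, Finsupp.mem_support_iff.mp hp, right_ne_zero_of_mul (by simpa using hpa)⟩

end Finsupp

section Minor

variable {R ι V : Type*} [CommRing R]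

def minor (i j : ι) (t l : V) : MvPolynomial (ι × V) R :=
  X (i, t) * X (j, l) - X (i, l) * X (j, t)

@[simp]
lemma minor_self_rows (i : ι) (t l : V) : (minor i i t l : MvPolynomial (ι × V) R) = 0 := by
  rw [minor, mul_comm, sub_self]

lemma minor_swap_cols (i j : ι) (t l : V) :
    (minor i j l t : MvPolynomial (ι × V) R) = -minor i j t l := by
  simp only [minor]
  ring

lemma X_mul_minor (i j k : ι) (t l w : V) :
    (X (k, w) * minor i j t l : MvPolynomial (ι × V) R) =
      X (j, l) * minor i k t w + X (k, t) * minor i j w l - X (i, l) * minor j k t w := by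
  simp only [minor]
  ring

end Minor

section Segre

variable {R ι V C : Type*} [CommRing R] (c : V → C)

def segreWeight (p : ι × V) : (ι × C) ⊕ V →₀ ℕ :=
  Finsupp.single (.inl (p.1, c p.2)) 1 + Finsupp.single (.inr p.2) 1

variable {c}

lemma segreWeight_add_swap {i j : ι} {t l : V} (h : c t = c l) :
    segreWeight c (i, t) + segreWeight c (j, l) = segreWeight c (i, l) + segreWeight c (j, t) := by
  simp only [segreWeight, h]
  abel

lemma linearCombination_segreWeight_single_add (p : ι × V) (μ : ι × V →₀ ℕ) :
    Finsupp.linearCombination ℕ (segreWeight c) (Finsupp.single p 1 + μ) =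
      segreWeight c p + Finsupp.linearCombination ℕ (segreWeight c) μ := by
  simp [Finsupp.linearCombination_single]

lemma eq_zero_of_linearCombination_segreWeight_eq_zero {ν : ι × V →₀ ℕ}
    (h : Finsupp.linearCombination ℕ (segreWeight c) ν = 0) : ν = 0 := by
  by_contra hν
  obtain ⟨p, hp⟩ := Finsupp.ne_iff.mp hν
  obtain ⟨ν', rfl⟩ := exists_eq_single_add hp
  rw [linearCombination_segreWeight_single_add] at h
  simpa [segreWeight] using congrArg (· (.inr p.2)) h

lemma monomialMap_segreWeight_minor {i j : ι} {t l : V} (h : c t = c l) :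
    monomialMap (R := R) (segreWeight c) (minor i j t l) = 0 := by
  simp only [minor, map_sub, map_mul, monomialMap_X, monomial_mul, segreWeight_add_swap h,
    sub_self]

section Straightening

variable {I : Ideal (MvPolynomial (ι × V) R)}
  (hI : ∀ i j t l, c t = c l → minor i j t l ∈ I)
include hI

-- Exchanging `x_{it'} x_{jt}` for `x_{it} x_{jt'}`, a minor since `c t = c t'`.
lemma exists_swap {ν : ι × V →₀ ℕ} {i : ι} {t : V}
    (hrow : Finsupp.linearCombination ℕ (segreWeight c) ν (.inl (i, c t)) ≠ 0)
    (hcol : Finsupp.linearCombination ℕ (segreWeight c) ν (.inr t) ≠ 0) :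
    ∃ ν₂, Finsupp.linearCombination ℕ (segreWeight c) ν₂ =
        Finsupp.linearCombination ℕ (segreWeight c) ν ∧ ν₂ (i, t) ≠ 0 ∧
      monomial ν₂ (1 : R) - monomial ν 1 ∈ I := by
  obtain ⟨⟨i', t'⟩, hit', hw⟩ := exists_ne_zero_of_linearCombination_apply_ne_zero hrow
  obtain ⟨⟨j, t''⟩, hjt, hw'⟩ := exists_ne_zero_of_linearCombination_apply_ne_zero hcol
  classical
  simp only [segreWeight, Finsupp.add_apply, Finsupp.single_apply] at hw hw'
  obtain ⟨rfl, htt'⟩ : i = i' ∧ c t = c t' := by simpa [eq_comm] using hw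
  obtain rfl : t = t'' := by simpa [eq_comm] using hw'
  by_cases hij : i = j
  · subst hij
    exact ⟨ν, rfl, hjt, by rw [sub_self]; exact I.zero_mem⟩
  obtain ⟨ν₁, rfl⟩ := exists_eq_single_add hit'
  have hne : ((i, t') : ι × V) ≠ (j, t) := fun h => hij (congrArg Prod.fst h)
  obtain ⟨ν', rfl⟩ := exists_eq_single_add (p := (j, t)) (μ := ν₁) (by simpa [hne] using hjt)
  refine ⟨Finsupp.single (i, t) 1 + (Finsupp.single (j, t') 1 + ν'), ?_, by simp, ?_⟩
  · simp only [linearCombination_segreWeight_single_add]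
    rw [← add_assoc, ← add_assoc, segreWeight_add_swap htt']
  · have hm : monomial (Finsupp.single (i, t) 1 + (Finsupp.single (j, t') 1 + ν')) (1 : R) -
        monomial (Finsupp.single (i, t') 1 + (Finsupp.single (j, t) 1 + ν')) 1 =
        minor i j t t' * monomial ν' 1 := by
      simp only [monomial_single_add, minor]
      ring
    rw [hm]
    exact I.mul_mem_right _ (hI i j t t' htt')

lemma monomial_sub_monomial_mem_of_linearCombination_eq :
    ∀ μ ν : ι × V →₀ ℕ, Finsupp.linearCombination ℕ (segreWeight c) μ =
      Finsupp.linearCombination ℕ (segreWeight c) ν → monomial μ (1 : R) - monomial ν 1 ∈ I := by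
  intro μ
  induction μ using WellFoundedLT.induction with
  | ind μ ih =>
  intro ν hE
  by_cases hμ : μ = 0
  · subst hμ
    obtain rfl := eq_zero_of_linearCombination_segreWeight_eq_zero (hE.symm.trans (map_zero _))
    rw [sub_self]
    exact I.zero_mem
  obtain ⟨⟨i, t⟩, hit⟩ := Finsupp.ne_iff.mp hμ
  obtain ⟨μ', rfl⟩ := exists_eq_single_add hit
  rw [linearCombination_segreWeight_single_add] at hE
  obtain ⟨ν₂, hE₂, hν₂, hmem⟩ := exists_swap hI (ν := ν) (i := i) (t := t)
    (by simp [← hE, segreWeight]) (by simp [← hE, segreWeight])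
  obtain ⟨ν₂', rfl⟩ := exists_eq_single_add hν₂
  rw [← hE₂, linearCombination_segreWeight_single_add] at hE
  have hlt : μ' < Finsupp.single (i, t) 1 + μ' :=
    lt_add_of_pos_left _ (by simp [pos_iff_ne_zero])
  have hrec := ih μ' hlt ν₂' (add_left_cancel hE)
  have hsplit : monomial (Finsupp.single (i, t) 1 + μ') (1 : R) - monomial ν 1 =
      X (i, t) * (monomial μ' 1 - monomial ν₂' 1) +
        (monomial (Finsupp.single (i, t) 1 + ν₂') 1 - monomial ν 1) := by
    simp only [monomial_single_add]
    ring
  rw [hsplit]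
  exact add_mem (I.mul_mem_left _ hrec) hmem

end Straightening

theorem ker_monomialMap_segreWeight : RingHom.ker (monomialMap (R := R) (segreWeight (ι := ι) c)) =
    Ideal.span {f | ∃ i j t l, c t = c l ∧ f = minor i j t l} := by
  refine le_antisymm (ker_monomialMap_le (monomial_sub_monomial_mem_of_linearCombination_eq ?_)) ?_
  · exact fun i j t l h => Ideal.subset_span ⟨i, j, t, l, h, rfl⟩
  · rw [Ideal.span_le]
    rintro _ ⟨i, j, t, l, h, rfl⟩
    exact monomialMap_segreWeight_minor h

end Segre

section Ideals

variable {K : Type} [Field K] {m : ℕ} {V : Type} {G G' : SimpleGraph V} {T : Finset V}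

lemma genBEI_le {I : Ideal (MvPolynomial (Fin m × V) K)}
    (h : ∀ i j t l, G.Adj t l → minor i j t l ∈ I) : genBEI K m G ≤ I := by
  rw [genBEI, Ideal.span_le]
  rintro _ ⟨i, j, t, l, -, hadj, rfl⟩
  exact h i j t l hadj

lemma minor_mem_genBEI {t l : V} (h : G.Adj t l) (i j : Fin m) :
    minor i j t l ∈ genBEI K m G := by
  obtain rfl | hij := eq_or_ne i j
  · rw [minor_self_rows]
    exact zero_mem _
  · exact Ideal.subset_span ⟨i, j, t, l, hij, h, rfl⟩

lemma genBEI_mono (h : G ≤ G') : genBEI K m G ≤ genBEI K m G' :=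
  genBEI_le fun i j _ _ hadj => minor_mem_genBEI (h hadj) i j

lemma PTIdeal_le {I : Ideal (MvPolynomial (Fin m × V) K)}
    (hX : ∀ i j, j ∈ T → X (i, j) ∈ I)
    (hminor : ∀ i j t l (ht : t ∉ T) (hl : l ∉ T), t ≠ l →
      (G.induce {v | v ∉ T}).Reachable ⟨t, ht⟩ ⟨l, hl⟩ → minor i j t l ∈ I) :
    PTIdeal K m G T ≤ I := by
  rw [PTIdeal, Ideal.span_le]
  rintro _ (⟨i, j, hj, rfl⟩ | ⟨i, j, t, l, ht, hl, -, htl, hr, rfl⟩)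
  · exact hX i j hj
  · exact hminor i j t l ht hl htl hr

lemma X_mem_PTIdeal (i : Fin m) {j : V} (hj : j ∈ T) : X (i, j) ∈ PTIdeal K m G T :=
  Ideal.subset_span (Or.inl ⟨i, j, hj, rfl⟩)

lemma span_X_le_PTIdeal :
    Ideal.span (X '' {p : Fin m × V | p.2 ∈ T}) ≤ PTIdeal K m G T := by
  rw [Ideal.span_le]
  rintro _ ⟨⟨i, j⟩, hj, rfl⟩
  exact X_mem_PTIdeal i hj

lemma minor_mem_PTIdeal (i j : Fin m) {t l : V} (ht : t ∉ T) (hl : l ∉ T)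
    (hr : (G.induce {v | v ∉ T}).Reachable ⟨t, ht⟩ ⟨l, hl⟩) :
    minor i j t l ∈ PTIdeal K m G T := by
  obtain rfl | hij := eq_or_ne i j
  · rw [minor_self_rows]
    exact zero_mem _
  obtain rfl | htl := eq_or_ne t l
  · rw [minor, sub_self]
    exact zero_mem _
  exact Ideal.subset_span (Or.inr ⟨i, j, t, l, ht, hl, hij, htl, hr, rfl⟩)

lemma minor_mem_PTIdeal_of_left_mem (i j : Fin m) {t : V} (l : V) (ht : t ∈ T) :
    minor i j t l ∈ PTIdeal K m G T :=
  sub_mem (Ideal.mul_mem_right _ _ (X_mem_PTIdeal i ht))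
    (Ideal.mul_mem_left _ _ (X_mem_PTIdeal j ht))

lemma minor_mem_PTIdeal_of_right_mem (i j : Fin m) (t : V) {l : V} (hl : l ∈ T) :
    minor i j t l ∈ PTIdeal K m G T := by
  rw [minor_swap_cols]
  exact neg_mem (minor_mem_PTIdeal_of_left_mem i j t hl)

lemma genBEI_le_PTIdeal (G : SimpleGraph V) (T : Finset V) :
    genBEI K m G ≤ PTIdeal K m G T := by
  refine genBEI_le fun i j t l hadj => ?_
  by_cases ht : t ∈ T
  · exact minor_mem_PTIdeal_of_left_mem i j l ht
  by_cases hl : l ∈ T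
  · exact minor_mem_PTIdeal_of_right_mem i j t hl
  exact minor_mem_PTIdeal i j ht hl (Adj.reachable (by exact hadj))

lemma reachable_induce_mono {s s' : Set V} (hG : G ≤ G') (hs : s ⊆ s') {a b : V}
    {ha : a ∈ s} {hb : b ∈ s} {ha' : a ∈ s'} {hb' : b ∈ s'}
    (h : (G.induce s).Reachable ⟨a, ha⟩ ⟨b, hb⟩) :
    (G'.induce s').Reachable ⟨a, ha'⟩ ⟨b, hb'⟩ :=
  h.map (induceHom (.ofLE hG) hs)

lemma PTIdeal_mono (h : G ≤ G') (T : Finset V) : PTIdeal K m G T ≤ PTIdeal K m G' T :=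
  PTIdeal_le (fun i _ hj => X_mem_PTIdeal i hj)
    (fun i j _ _ ht hl _ hr => minor_mem_PTIdeal i j ht hl (reachable_induce_mono h subset_rfl hr))

end Ideals

section Primality

variable {K : Type} [Field K] {m : ℕ} {V : Type} [DecidableEq V] (G : SimpleGraph V)
  (T : Finset V)

def componentOf (j : V) : Option (G.induce {v | v ∉ T}).ConnectedComponent :=
  if h : j ∈ T then none else some (connectedComponentMk _ ⟨j, h⟩)

variable {G T}

lemma minor_mem_PTIdeal_of_componentOf_eq (i j : Fin m) {t l : V}
    (h : componentOf G T t = componentOf G T l) : minor i j t l ∈ PTIdeal K m G T := by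
  by_cases ht : t ∈ T
  · exact minor_mem_PTIdeal_of_left_mem i j l ht
  by_cases hl : l ∈ T
  · exact minor_mem_PTIdeal_of_right_mem i j t hl
  simp only [componentOf, dif_neg ht, dif_neg hl, Option.some.injEq,
    ConnectedComponent.eq] at h
  exact minor_mem_PTIdeal i j ht hl h

theorem PTIdeal_eq_ker : PTIdeal K m G T = RingHom.ker
    ((monomialMap (segreWeight (componentOf G T))).comp (zeroVars {p : Fin m × V | p.2 ∈ T})) := by
  refine le_antisymm (PTIdeal_le (fun i j hj => ?_) (fun i j t l ht hl _ hr => ?_)) fun f hf => ?_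
  · simp [zeroVars_X, hj]
  · have hc : componentOf G T t = componentOf G T l := by
      simp only [componentOf, dif_neg ht, dif_neg hl, ConnectedComponent.eq.mpr hr]
    have hfix : zeroVars {p : Fin m × V | p.2 ∈ T} (minor i j t l : MvPolynomial _ K) =
        minor i j t l := by
      simp [minor, zeroVars_X, ht, hl]
    simp [hfix, monomialMap_segreWeight_minor hc]
  · have hker : zeroVars {p : Fin m × V | p.2 ∈ T} f ∈
        RingHom.ker (monomialMap (R := K) (segreWeight (ι := Fin m) (componentOf G T))) := hf
    have hle : Ideal.span {g | ∃ i j t l, componentOf G T t = componentOf G T l ∧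
        g = minor i j t l} ≤ PTIdeal K m G T := by
      rw [Ideal.span_le]
      rintro _ ⟨i, j, t, l, h, rfl⟩
      exact minor_mem_PTIdeal_of_componentOf_eq i j h
    rw [ker_monomialMap_segreWeight] at hker
    have hf' := add_mem (span_X_le_PTIdeal (sub_zeroVars_mem f)) (hle hker)
    rwa [sub_add_cancel] at hf'

theorem PTIdeal_isPrime (G : SimpleGraph V) (T : Finset V) : (PTIdeal K m G T).IsPrime := by
  rw [PTIdeal_eq_ker]
  exact RingHom.ker_isPrime _

end Primality


section CutSets

variable {V : Type} {H : SimpleGraph V} {A B : Set V} {v : V}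

lemma reachable_induce_of_forall_not_adj (hBA : B ⊆ A) (hA : ∀ x ∈ A, x ∉ B → x = v)
    (hv : ∀ u ∈ B, ¬ H.Adj v u) {t l : V} (ht : t ∈ B) (hl : l ∈ B)
    (hr : (H.induce A).Reachable ⟨t, hBA ht⟩ ⟨l, hBA hl⟩) :
    (H.induce B).Reachable ⟨t, ht⟩ ⟨l, hl⟩ := by
  classical
  -- `v` is isolated in `H[A]`, so it may be sent anywhere, e.g. to `t`.
  let F : H.induce A →g H.induce B :=
    { toFun := fun x => if h : x.1 ∈ B then ⟨x.1, h⟩ else ⟨t, ht⟩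
      map_rel' := by
        rintro ⟨x, hx⟩ ⟨y, hy⟩ hxy
        have hxy' : H.Adj x y := hxy
        by_cases hxB : x ∈ B
        · by_cases hyB : y ∈ B
          · simpa [hxB, hyB] using hxy'
          · obtain rfl := hA y hy hyB
            exact absurd hxy'.symm (hv x hxB)
        · obtain rfl := hA x hx hxB
          have hyB : y ∈ B := by
            by_contra hyB
            exact hxy'.ne (hA y hy hyB).symm
          exact absurd hxy' (hv y hyB) }
  simpa [F, ht, hl] using hr.map F

lemma reachable_induce_of_card_le [Finite V] (hBA : B ⊆ A) (hA : ∀ x ∈ A, x ∉ B → x = v)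
    (hcard : Nat.card (H.induce B).ConnectedComponent ≤ Nat.card (H.induce A).ConnectedComponent)
    {t l : V} (ht : t ∈ B) (hl : l ∈ B)
    (hr : (H.induce A).Reachable ⟨t, hBA ht⟩ ⟨l, hBA hl⟩) :
    (H.induce B).Reachable ⟨t, ht⟩ ⟨l, hl⟩ := by
  by_cases hv : ∀ u ∈ B, ¬ H.Adj v u
  · exact reachable_induce_of_forall_not_adj hBA hA hv ht hl hr
  push Not at hv
  obtain ⟨u, hu, hvu⟩ := hv
  set q := ConnectedComponent.map (H.induceHomOfLE hBA).toHom
  -- Every vertex of `H[A]` lies in `B` or is `v`, which is joined to `u ∈ B`.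
  have hq : Function.Surjective q := by
    refine ConnectedComponent.ind fun ⟨x, hx⟩ => ?_
    by_cases hxB : x ∈ B
    · exact ⟨connectedComponentMk _ ⟨x, hxB⟩, rfl⟩
    · obtain rfl := hA x hx hxB
      refine ⟨connectedComponentMk _ ⟨u, hu⟩, ?_⟩
      exact ConnectedComponent.eq.mpr (Adj.reachable (G := H.induce A) hvu.symm)
  have hinj := (hq.bijective_of_nat_card_le hcard).injective
  exact ConnectedComponent.eq.mp (hinj (ConnectedComponent.eq.mpr hr))

variable {K : Type} [Field K] {m : ℕ} [DecidableEq V] {G : SimpleGraph V}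

lemma PTIdeal_erase_le [Finite V] {T : Finset V} (hv : v ∈ T)
    (hcard : numComp G T ≤ numComp G (T.erase v)) :
    PTIdeal K m G (T.erase v) ≤ PTIdeal K m G T := by
  refine PTIdeal_le (fun i j hj => X_mem_PTIdeal i (Finset.mem_of_mem_erase hj))
    (fun i j t l ht hl _ hr => ?_)
  by_cases htv : t = v
  · exact minor_mem_PTIdeal_of_left_mem i j l (htv ▸ hv)
  by_cases hlv : l = v
  · exact minor_mem_PTIdeal_of_right_mem i j t (hlv ▸ hv)
  have hBA : {x | x ∉ T} ⊆ {x | x ∉ T.erase v} := fun x hx hx' => hx (Finset.mem_of_mem_erase hx')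
  have hA : ∀ x ∈ {x | x ∉ T.erase v}, x ∉ {x | x ∉ T} → x = v := by
    intro x hx hxT
    by_contra hxv
    exact hx (Finset.mem_erase.mpr ⟨hxv, not_not.mp hxT⟩)
  have ht' : t ∉ T := fun h => ht (Finset.mem_erase.mpr ⟨htv, h⟩)
  have hl' : l ∉ T := fun h => hl (Finset.mem_erase.mpr ⟨hlv, h⟩)
  exact minor_mem_PTIdeal i j ht' hl' (reachable_induce_of_card_le hBA hA hcard ht' hl' hr)

lemma exists_mem_cutSets_PTIdeal_le [Finite V] (T : Finset V) :
    ∃ T' ∈ cutSets G, PTIdeal K m G T' ≤ PTIdeal K m G T := by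
  induction T using Finset.strongInduction with
  | H T ih =>
    by_cases hcut : T = ∅ ∨ hasCutPointProperty G T
    · exact ⟨T, hcut, le_rfl⟩
    obtain ⟨v, hv, hcard⟩ : ∃ v ∈ T, numComp G T ≤ numComp G (T.erase v) := by
      simpa [hasCutPointProperty] using (not_or.mp hcut).2
    obtain ⟨T', hT', hle⟩ := ih (T.erase v) (Finset.erase_ssubset hv)
    exact ⟨T', hT', hle.trans (PTIdeal_erase_le hv hcard)⟩

theorem iInf_cutSets_PTIdeal [Finite V] (G : SimpleGraph V) :
    ⨅ T ∈ cutSets G, PTIdeal K m G T = ⨅ T, PTIdeal K m G T := by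
  refine le_antisymm (le_iInf fun T => ?_) (le_iInf₂ fun T _ => iInf_le _ T)
  obtain ⟨T', hT', hle⟩ := exists_mem_cutSets_PTIdeal_le (K := K) (m := m) (G := G) T
  exact (iInf₂_le T' hT').trans hle

end CutSets


section Ohtani

variable {K : Type} [Field K] {m : ℕ} {V : Type} {G : SimpleGraph V} {v : V}

lemma delVert_le : delVert G v ≤ G := by
  intro a b hab
  rw [delVert, fromRel_adj] at hab
  rcases hab.2 with ⟨h, -⟩ | ⟨h, -⟩
  exacts [h, h.symm]

variable (K m G v) in
def neighborMinors : Set (MvPolynomial (Fin m × V) K) :=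
  {f | ∃ i j t l, G.Adj v t ∧ G.Adj v l ∧ f = minor i j t l}

lemma genBEI_addNbhdClique_le :
    genBEI K m (addNbhdClique G v) ≤ genBEI K m G ⊔ Ideal.span (neighborMinors K m G v) := by
  refine genBEI_le fun i j t l hadj => ?_
  rw [addNbhdClique, sup_adj, fromRel_adj] at hadj
  rcases hadj with hadj | ⟨-, ⟨ht, hl⟩ | ⟨hl, ht⟩⟩
  · exact Ideal.mem_sup_left (minor_mem_genBEI hadj i j)
  · exact Ideal.mem_sup_right (Ideal.subset_span ⟨i, j, t, l, ht, hl, rfl⟩)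
  · exact Ideal.mem_sup_right (Ideal.subset_span ⟨i, j, t, l, ht, hl, rfl⟩)

lemma span_X_mul_span_neighborMinors_le :
    Ideal.span (X '' {p : Fin m × V | p.2 = v}) * Ideal.span (neighborMinors K m G v) ≤
      genBEI K m G := by
  rw [Ideal.span_mul_span', Ideal.span_le]
  rintro _ ⟨_, ⟨⟨k, w⟩, hw, rfl⟩, _, ⟨i, j, t, l, ht, hl, rfl⟩, rfl⟩
  change w = v at hw
  subst hw
  change X (k, w) * minor i j t l ∈ genBEI K m G
  rw [X_mul_minor]
  exact sub_mem (add_mem (Ideal.mul_mem_left _ _ (minor_mem_genBEI ht.symm i k))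
    (Ideal.mul_mem_left _ _ (minor_mem_genBEI hl i j)))
    (Ideal.mul_mem_left _ _ (minor_mem_genBEI ht.symm j k))

variable [DecidableEq V]

lemma zeroVars_minor_of_ne (i j : Fin m) {t l : V} (ht : t ≠ v) (hl : l ≠ v) :
    zeroVars {p : Fin m × V | p.2 = v} (minor i j t l : MvPolynomial _ K) = minor i j t l := by
  simp [minor, zeroVars_X, ht, hl]

lemma zeroVars_minor_of_left_eq (i j : Fin m) (l : V) :
    zeroVars {p : Fin m × V | p.2 = v} (minor i j v l : MvPolynomial _ K) = 0 := by
  simp [minor, zeroVars_X]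

lemma genBEI_le_comap_zeroVars :
    genBEI K m G ≤ (genBEI K m (delVert G v)).comap (zeroVars {p : Fin m × V | p.2 = v}) := by
  refine genBEI_le fun i j t l hadj => ?_
  rw [Ideal.mem_comap]
  by_cases ht : t = v
  · rw [ht, zeroVars_minor_of_left_eq]
    exact zero_mem _
  by_cases hl : l = v
  · rw [hl, minor_swap_cols, map_neg, zeroVars_minor_of_left_eq, neg_zero]
    exact zero_mem _
  rw [zeroVars_minor_of_ne i j ht hl]
  exact minor_mem_genBEI (by rw [delVert, fromRel_adj]; exact ⟨hadj.ne, .inl ⟨hadj, ht, hl⟩⟩) i j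

lemma sub_zeroVars_mem_genBEI {f : MvPolynomial (Fin m × V) K}
    (hf : f ∈ Ideal.span (neighborMinors K m G v)) :
    f - zeroVars {p : Fin m × V | p.2 = v} f ∈ genBEI K m G := by
  induction hf using Submodule.span_induction with
  | mem g hg =>
    obtain ⟨i, j, t, l, ht, hl, rfl⟩ := hg
    rw [zeroVars_minor_of_ne i j (G.ne_of_adj ht).symm (G.ne_of_adj hl).symm, sub_self]
    exact zero_mem _
  | zero => simp
  | add f g _ _ hf hg => simpa only [map_add, add_sub_add_comm] using add_mem hf hg
  | smul a f hf' hf =>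
    have hsplit : a * f - zeroVars {p : Fin m × V | p.2 = v} (a * f) =
        (a - zeroVars {p : Fin m × V | p.2 = v} a) * f +
          zeroVars {p : Fin m × V | p.2 = v} a * (f - zeroVars {p : Fin m × V | p.2 = v} f) := by
      rw [map_mul]
      ring
    rw [smul_eq_mul, hsplit]
    exact add_mem (span_X_mul_span_neighborMinors_le (Ideal.mul_mem_mul (sub_zeroVars_mem a) hf'))
      (Ideal.mul_mem_left _ _ hf)

/-- The hard inclusion of Ohtani's lemma `J_G = J_{G_v} ∩ ((x_{iv} : i ∈ [m]) + J_{G ∖ v})`. -/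
theorem mem_genBEI_of_mem_addNbhdClique {f : MvPolynomial (Fin m × V) K}
    (h₁ : f ∈ genBEI K m (addNbhdClique G v))
    (h₂ : zeroVars {p : Fin m × V | p.2 = v} f ∈ genBEI K m (delVert G v)) :
    f ∈ genBEI K m G := by
  obtain ⟨g, hg, q, hq, rfl⟩ := Submodule.mem_sup.mp (genBEI_addNbhdClique_le h₁)
  have hρg : zeroVars {p : Fin m × V | p.2 = v} g ∈ genBEI K m G :=
    genBEI_mono delVert_le (genBEI_le_comap_zeroVars hg)
  have hρq : zeroVars {p : Fin m × V | p.2 = v} q ∈ genBEI K m G := by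
    have h := sub_mem (genBEI_mono delVert_le h₂) hρg
    rwa [map_add, add_sub_cancel_left] at h
  have hdecomp : g + q = g + (q - zeroVars {p : Fin m × V | p.2 = v} q) +
      zeroVars {p : Fin m × V | p.2 = v} q := by ring
  rw [hdecomp]
  exact add_mem (add_mem hg (sub_zeroVars_mem_genBEI hq)) hρq

end Ohtani


section Induction

variable {K : Type} [Field K] {m : ℕ} {V : Type} {G : SimpleGraph V} {v : V}

lemma adj_of_reachable (hG : ∀ v a b, G.Adj v a → G.Adj v b → a ≠ b → G.Adj a b) {t l : V}
    (h : G.Reachable t l) (htl : t ≠ l) : G.Adj t l := by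
  obtain ⟨w⟩ := h
  induction w with
  | nil => exact absurd rfl htl
  | @cons a b c hab w ih =>
    obtain rfl | hbc := eq_or_ne b c
    · exact hab
    obtain rfl | hac := eq_or_ne a c
    · exact absurd rfl htl
    exact hG b a c hab.symm (ih hbc) htl

lemma PTIdeal_empty_le (hG : ∀ v a b, G.Adj v a → G.Adj v b → a ≠ b → G.Adj a b) :
    PTIdeal K m G ∅ ≤ genBEI K m G := by
  refine PTIdeal_le (fun _ _ hj => absurd hj (Finset.notMem_empty _))
    (fun i j t l _ _ htl hr => minor_mem_genBEI (adj_of_reachable hG ?_ htl) i j)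
  exact hr.map (Embedding.induce _).toHom

lemma induce_delVert {T : Finset V} (hv : v ∈ T) :
    (delVert G v).induce {x | x ∉ T} = G.induce {x | x ∉ T} := by
  ext ⟨a, ha⟩ ⟨b, hb⟩
  have hav : a ≠ v := fun h => ha (h ▸ hv)
  have hbv : b ≠ v := fun h => hb (h ▸ hv)
  simp only [comap_adj, Function.Embedding.subtype_apply, delVert, fromRel_adj]
  constructor
  · rintro ⟨-, ⟨h, -⟩ | ⟨h, -⟩⟩
    exacts [h, h.symm]
  · exact fun h => ⟨h.ne, .inl ⟨h, hav, hbv⟩⟩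

lemma PTIdeal_delVert {T : Finset V} (hv : v ∈ T) :
    PTIdeal K m (delVert G v) T = PTIdeal K m G T := by
  rw [PTIdeal, PTIdeal, induce_delVert hv]

lemma support_addNbhdClique : (addNbhdClique G v).support = G.support := by
  refine subset_antisymm (fun x hx => ?_) (support_mono le_sup_left)
  obtain ⟨u, hu⟩ := (mem_support _).mp hx
  rw [addNbhdClique, sup_adj, fromRel_adj] at hu
  rcases hu with hu | ⟨-, ⟨hx, -⟩ | ⟨-, hx⟩⟩
  exacts [hu.left_mem_support, hx.right_mem_support, hx.right_mem_support]

lemma lt_addNbhdClique {a b : V} (ha : G.Adj v a) (hb : G.Adj v b) (hab : a ≠ b)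
    (hnab : ¬ G.Adj a b) : G < addNbhdClique G v := by
  refine lt_of_le_of_ne le_sup_left fun h => hnab ?_
  rw [h, addNbhdClique, sup_adj, fromRel_adj]
  exact .inr ⟨hab, .inl ⟨ha, hb⟩⟩

lemma support_delVert_ssubset {a : V} (ha : G.Adj v a) : (delVert G v).support ⊂ G.support := by
  refine (Set.ssubset_iff_of_subset (support_mono delVert_le)).mpr ⟨v, ha.left_mem_support, ?_⟩
  intro hv
  obtain ⟨u, hu⟩ := (mem_support _).mp hv
  rw [delVert, fromRel_adj] at hu
  rcases hu.2 with ⟨-, h, -⟩ | ⟨-, -, h⟩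
  exacts [h rfl, h rfl]

variable [DecidableEq V]

lemma PTIdeal_insert_le_comap_zeroVars (H : SimpleGraph V) (T : Finset V) :
    PTIdeal K m H (insert v T) ≤
      (PTIdeal K m H T).comap (zeroVars {p : Fin m × V | p.2 = v}) := by
  refine PTIdeal_le (fun i j hj => ?_) (fun i j t l ht hl _ hr => ?_) <;> rw [Ideal.mem_comap]
  · by_cases hjv : j = v
    · simp [zeroVars_X, hjv]
    · simpa [zeroVars_X, hjv] using X_mem_PTIdeal i ((Finset.mem_insert.mp hj).resolve_left hjv)
  · have ht' : t ∉ T := fun h => ht (Finset.mem_insert_of_mem h)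
    have hl' : l ∉ T := fun h => hl (Finset.mem_insert_of_mem h)
    rw [zeroVars_minor_of_ne i j (fun h => ht (Finset.mem_insert.mpr (.inl h)))
      (fun h => hl (Finset.mem_insert.mpr (.inl h)))]
    have hsub : {x | x ∉ insert v T} ⊆ {x | x ∉ T} := fun x hx h => hx (Finset.mem_insert_of_mem h)
    exact minor_mem_PTIdeal i j ht' hl' (reachable_induce_mono le_rfl hsub hr)

theorem iInf_PTIdeal_le_genBEI [Finite V] (G : SimpleGraph V) :
    ⨅ T, PTIdeal K m G T ≤ genBEI K m G := by
  by_cases hG : ∀ v a b, G.Adj v a → G.Adj v b → a ≠ b → G.Adj a b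
  · exact (iInf_le _ ∅).trans (PTIdeal_empty_le hG)
  push Not at hG
  obtain ⟨v, a, b, ha, hb, hab, hnab⟩ := hG
  intro f hf
  rw [Submodule.mem_iInf] at hf
  have h₁ : f ∈ genBEI K m (addNbhdClique G v) :=
    iInf_PTIdeal_le_genBEI (addNbhdClique G v)
      (Submodule.mem_iInf _ |>.mpr fun T => PTIdeal_mono le_sup_left T (hf T))
  have h₂ : zeroVars {p : Fin m × V | p.2 = v} f ∈ genBEI K m (delVert G v) := by
    refine iInf_PTIdeal_le_genBEI (delVert G v) (Submodule.mem_iInf _ |>.mpr fun T => ?_)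
    have hfT := hf (insert v T)
    rw [← PTIdeal_delVert (Finset.mem_insert_self v T)] at hfT
    exact PTIdeal_insert_le_comap_zeroVars _ T hfT
  exact mem_genBEI_of_mem_addNbhdClique h₁ h₂
termination_by (G.support.ncard, Gᶜ.edgeSet.ncard)
decreasing_by
  · rw [support_addNbhdClique]
    exact Prod.Lex.right _ (Set.ncard_lt_ncard (edgeSet_ssubset_edgeSet.mpr
      (compl_lt_compl_iff_lt.mpr (lt_addNbhdClique ha hb hab hnab))) (Set.toFinite _))
  · exact Prod.Lex.left _ _ (Set.ncard_lt_ncard (support_delVert_ssubset ha) (Set.toFinite _))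

end Induction

theorem genBEI_eq_iInf_cutSets {K : Type} [Field K] {m : ℕ} {V : Type} [Finite V]
    [DecidableEq V] (G : SimpleGraph V) :
    genBEI K m G = ⨅ T ∈ cutSets G, PTIdeal K m G T := by
  rw [iInf_cutSets_PTIdeal]
  exact le_antisymm (le_iInf (genBEI_le_PTIdeal G)) (iInf_PTIdeal_le_genBEI G)

end GenBEI

theorem genBEI_primary_decomposition_general
    (K : Type) [Field K] (m n : ℕ) (G : SimpleGraph (Fin n)) :
    (genBEI K m G = ⨅ T ∈ cutSets G, PTIdeal K m G T) ∧
    (genBEI K m G).IsRadical ∧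
    ∀ T ∈ cutSets G, (PTIdeal K m G T).IsPrime := by
  refine ⟨GenBEI.genBEI_eq_iInf_cutSets G, ?_, fun T _ => GenBEI.PTIdeal_isPrime G T⟩
  rw [GenBEI.genBEI_eq_iInf_cutSets G]
  exact Ideal.isRadical_iInf _ fun T =>
    Ideal.isRadical_iInf _ fun _ => (GenBEI.PTIdeal_isPrime G T).isRadical

theorem genBEI_primary_decomposition
    (K : Type) [Field K] (m n : ℕ) (hm : 2 ≤ m) (G : SimpleGraph (Fin n)) :
    (genBEI K m G = ⨅ T ∈ cutSets G, PTIdeal K m G T) ∧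
    (genBEI K m G).IsRadical ∧
    ∀ T ∈ cutSets G, (PTIdeal K m G T).IsPrime :=
  genBEI_primary_decomposition_general K m n G
end
end

section
/- Let G be a simple graph and v an internal (non-leaf) vertex of G. Then J_{K_m,G} = J_{K_m,G_v} ∩ ((x_{iv} : i ∈ [m]) + J_{K_m, G∖v}), and moreover J_{K_m,G_v} + ((x_{iv} : i∈[m]) + J_{K_m,G∖v}) = (x_{iv} : i∈[m]) + J_{K_m, G_v∖v}. -/
open MvPolynomial

noncomputable section


/-!
Let `φ` be the substitution `x_{iv} ↦ 0` and `P = (x_{iv} : i ∈ [m])`. For `p ∈ J_{G_v}` one has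
`p - φ p ∈ P · J_{G_v} + J_G`, and `P · J_{G_v} ⊆ J_G`: multiplying a new binomial
`f_{ij}(u, w)` (with `u, w` neighbours of `v`) by `x_{kv}` gives a combination of the binomials
of the edges `{v, u}` and `{v, w}`. If moreover `p = y + z` with `y ∈ P` and `z ∈ J_{G∖v}`, then
`φ p = φ z ∈ J_G`, so `p ∈ J_G`. The second equality only uses `J_H ⊆ P + J_{H∖v}`.
-/

theorem sub_map_mem_mul_span_sup {R F : Type*} [CommRing R] [FunLike F R R] [RingHomClass F R R]
    (φ : F) {Q T : Ideal R} (hQ : ∀ r, r - φ r ∈ Q) {S : Set R} (hS : ∀ s ∈ S, s - φ s ∈ T)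
    {p : R} (hp : p ∈ Ideal.span S) : p - φ p ∈ Q * Ideal.span S ⊔ T := by
  induction hp using Submodule.span_induction with
  | mem s hs => exact Ideal.mem_sup_right (hS s hs)
  | zero => simp
  | add a b _ _ ha hb =>
    rw [map_add, add_sub_add_comm]
    exact add_mem ha hb
  | smul r a ha ih =>
    have h : r * a - φ (r * a) = (r - φ r) * a + φ r * (a - φ a) := by rw [map_mul]; ring
    rw [smul_eq_mul, h]
    exact add_mem (Ideal.mem_sup_left (Ideal.mul_mem_mul (hQ r) ha)) (Ideal.mul_mem_left _ _ ih)

theorem MvPolynomial.sub_aeval_mem {R σ : Type*} [CommRing R] {Q : Ideal (MvPolynomial σ R)}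
    {g : σ → MvPolynomial σ R} (h : ∀ n, X n - g n ∈ Q) (p : MvPolynomial σ R) :
    p - aeval g p ∈ Q := by
  have hcomp : (Ideal.Quotient.mkₐ R Q).comp (aeval g) = Ideal.Quotient.mkₐ R Q :=
    algHom_ext fun n => by simpa using (Ideal.Quotient.eq.mpr (h n)).symm
  rw [← Ideal.Quotient.eq]
  simpa using (DFunLike.congr_fun hcomp p).symm

section GeneralizedBinomialEdgeIdeal

variable {V : Type} {G H : SimpleGraph V} {v : V}

theorem delVert_adj {a b : V} : (delVert G v).Adj a b ↔ G.Adj a b ∧ a ≠ v ∧ b ≠ v := by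
  rw [delVert, SimpleGraph.fromRel_adj]
  constructor
  · rintro ⟨-, h | ⟨h, hb, ha⟩⟩
    · exact h
    · exact ⟨h.symm, ha, hb⟩
  · rintro ⟨h, ha, hb⟩
    exact ⟨h.ne, Or.inl ⟨h, ha, hb⟩⟩

theorem addNbhdClique_adj {a b : V} :
    (addNbhdClique G v).Adj a b ↔ G.Adj a b ∨ (a ≠ b ∧ G.Adj v a ∧ G.Adj v b) := by
  rw [addNbhdClique, SimpleGraph.sup_adj, SimpleGraph.fromRel_adj]
  constructor
  · rintro (h | ⟨hne, h | ⟨hb, ha⟩⟩)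
    · exact Or.inl h
    · exact Or.inr ⟨hne, h⟩
    · exact Or.inr ⟨hne, ha, hb⟩
  · rintro (h | ⟨hne, h⟩)
    · exact Or.inl h
    · exact Or.inr ⟨hne, Or.inl h⟩

theorem le_addNbhdClique : G ≤ addNbhdClique G v := fun _ _ h => addNbhdClique_adj.mpr (Or.inl h)

theorem delVert_le : delVert G v ≤ G := fun _ _ h => (delVert_adj.mp h).1

theorem delVert_mono (h : G ≤ H) : delVert G v ≤ delVert H v := fun _ _ hab =>
  have hab := delVert_adj.mp hab
  delVert_adj.mpr ⟨h hab.1, hab.2⟩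

variable (K : Type) [Field K] (m : ℕ)

theorem genBEI_mono (h : G ≤ H) : genBEI K m G ≤ genBEI K m H :=
  Ideal.span_mono fun _ ⟨i, j, t, l, hij, hadj, hf⟩ => ⟨i, j, t, l, hij, h hadj, hf⟩

theorem binomial_mem_genBEI (i j : Fin m) {t l : V} (h : G.Adj t l) :
    (X (i, t) * X (j, l) - X (i, l) * X (j, t) : MvPolynomial (Fin m × V) K) ∈ genBEI K m G := by
  by_cases hij : i = j
  · subst hij
    rw [mul_comm, sub_self]
    exact zero_mem _
  · exact Ideal.subset_span ⟨i, j, t, l, hij, h, rfl⟩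

theorem X_mul_binomial_mem_genBEI (i j k : Fin m) {u w : V} (hu : G.Adj v u) (hw : G.Adj v w) :
    (X (k, v) * (X (i, u) * X (j, w) - X (i, w) * X (j, u)) : MvPolynomial (Fin m × V) K) ∈
      genBEI K m G := by
  have key : (X (k, v) * (X (i, u) * X (j, w) - X (i, w) * X (j, u)) :
      MvPolynomial (Fin m × V) K) =
      X (k, u) * (X (i, v) * X (j, w) - X (i, w) * X (j, v))
      - X (j, w) * (X (i, v) * X (k, u) - X (i, u) * X (k, v))
      + X (i, w) * (X (j, v) * X (k, u) - X (j, u) * X (k, v)) := by ring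
  rw [key]
  refine add_mem (sub_mem ?_ ?_) ?_ <;> refine Ideal.mul_mem_left _ _ ?_
  · exact binomial_mem_genBEI K m i j hw
  · exact binomial_mem_genBEI K m i k hu
  · exact binomial_mem_genBEI K m j k hu

def vertexVarIdeal (v : V) : Ideal (MvPolynomial (Fin m × V) K) :=
  Ideal.span {f | ∃ i : Fin m, f = X (i, v)}

theorem vertexVarIdeal_mul_genBEI_addNbhdClique_le :
    vertexVarIdeal K m v * genBEI K m (addNbhdClique G v) ≤ genBEI K m G := by
  rw [vertexVarIdeal, genBEI, Ideal.span_mul_span', Ideal.span_le]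
  rintro _ ⟨_, ⟨k, rfl⟩, _, ⟨i, j, t, l, -, hadj, rfl⟩, rfl⟩
  rcases addNbhdClique_adj.mp hadj with h | ⟨-, ht, hl⟩
  · exact Ideal.mul_mem_left _ _ (binomial_mem_genBEI K m i j h)
  · exact X_mul_binomial_mem_genBEI K m i j k ht hl

variable [DecidableEq V]

def killVertex (v : V) : MvPolynomial (Fin m × V) K →ₐ[K] MvPolynomial (Fin m × V) K :=
  aeval fun p => if p.2 = v then 0 else X p

theorem sub_killVertex_mem_vertexVarIdeal (p : MvPolynomial (Fin m × V) K) :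
    p - killVertex K m v p ∈ vertexVarIdeal K m v := by
  refine MvPolynomial.sub_aeval_mem (fun ⟨i, t⟩ => ?_) p
  by_cases ht : t = v
  · subst ht
    rw [if_pos rfl, sub_zero]
    exact Ideal.subset_span ⟨i, rfl⟩
  · simp [ht]

theorem vertexVarIdeal_le_ker_killVertex :
    vertexVarIdeal K m v ≤ RingHom.ker (killVertex K m v) := by
  rw [vertexVarIdeal, Ideal.span_le]
  rintro _ ⟨i, rfl⟩
  simp [killVertex]

theorem map_killVertex_genBEI_le :
    Ideal.map (killVertex K m v) (genBEI K m G) ≤ genBEI K m (delVert G v) := by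
  rw [genBEI, Ideal.map_span, Ideal.span_le]
  rintro _ ⟨_, ⟨i, j, t, l, hij, hadj, rfl⟩, rfl⟩
  by_cases htl : t = v ∨ l = v
  · rcases htl with rfl | rfl <;> simp [killVertex]
  · push Not at htl
    simpa [killVertex, htl.1, htl.2] using (binomial_mem_genBEI K m i j
      (delVert_adj.mpr ⟨hadj, htl⟩) : _ ∈ genBEI K m (delVert G v))

theorem genBEI_le_vertexVarIdeal_sup_delVert :
    genBEI K m G ≤ vertexVarIdeal K m v ⊔ genBEI K m (delVert G v) := fun p hp => by
  rw [← sub_add_cancel p (killVertex K m v p)]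
  exact add_mem (Ideal.mem_sup_left (sub_killVertex_mem_vertexVarIdeal K m p))
    (Ideal.mem_sup_right (map_killVertex_genBEI_le K m (Ideal.mem_map_of_mem _ hp)))

theorem sub_killVertex_mem_genBEI {p : MvPolynomial (Fin m × V) K}
    (hp : p ∈ genBEI K m (addNbhdClique G v)) : p - killVertex K m v p ∈ genBEI K m G := by
  rw [genBEI] at hp
  refine sup_le (vertexVarIdeal_mul_genBEI_addNbhdClique_le K m) le_rfl
    (sub_map_mem_mul_span_sup _ (sub_killVertex_mem_vertexVarIdeal K m) ?_ hp)
  rintro _ ⟨i, j, t, l, -, hadj, rfl⟩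
  rcases addNbhdClique_adj.mp hadj with h | ⟨-, ht, hl⟩
  · refine sub_mem (binomial_mem_genBEI K m i j h) (genBEI_mono K m (delVert_le (v := v)) ?_)
    exact map_killVertex_genBEI_le K m (Ideal.mem_map_of_mem _ (binomial_mem_genBEI K m i j h))
  · simp [killVertex, ht.ne', hl.ne']

theorem genBEI_addNbhdClique_inf_le :
    genBEI K m (addNbhdClique G v) ⊓ (vertexVarIdeal K m v ⊔ genBEI K m (delVert G v)) ≤
      genBEI K m G := by
  intro p hp
  obtain ⟨hp, hyz⟩ := Submodule.mem_inf.mp hp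
  obtain ⟨y, hy, z, hz, rfl⟩ := Submodule.mem_sup.mp hyz
  have hφy : killVertex K m v y = 0 := vertexVarIdeal_le_ker_killVertex K m hy
  have hφz : killVertex K m v z ∈ genBEI K m G :=
    genBEI_mono K m (delVert_le.trans delVert_le)
      (map_killVertex_genBEI_le K m (Ideal.mem_map_of_mem _ hz))
  have hsplit : y + z = (y + z - killVertex K m v (y + z)) + killVertex K m v z := by
    rw [map_add, hφy, zero_add, sub_add_cancel]
  rw [hsplit]
  exact add_mem (sub_killVertex_mem_genBEI K m hp) hφz

end GeneralizedBinomialEdgeIdeal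

theorem genBEI_intersection_internal_vertex_general
    (K : Type) [Field K] (m : ℕ) (V : Type) (G : SimpleGraph V) (v : V) :
    genBEI K m G = genBEI K m (addNbhdClique G v) ⊓
      (Ideal.span {f | ∃ i : Fin m, f = (X (i, v) : MvPolynomial (Fin m × V) K)} ⊔
        genBEI K m (delVert G v)) ∧
    genBEI K m (addNbhdClique G v) ⊔
      (Ideal.span {f | ∃ i : Fin m, f = (X (i, v) : MvPolynomial (Fin m × V) K)} ⊔
        genBEI K m (delVert G v)) =
    Ideal.span {f | ∃ i : Fin m, f = (X (i, v) : MvPolynomial (Fin m × V) K)} ⊔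
      genBEI K m (delVert (addNbhdClique G v) v) := by
  classical
  refine ⟨le_antisymm ?_ (genBEI_addNbhdClique_inf_le K m), le_antisymm ?_ ?_⟩
  · exact le_inf (genBEI_mono K m le_addNbhdClique) (genBEI_le_vertexVarIdeal_sup_delVert K m)
  · exact sup_le (genBEI_le_vertexVarIdeal_sup_delVert K m)
      (sup_le le_sup_left (le_sup_of_le_right (genBEI_mono K m (delVert_mono le_addNbhdClique))))
  · exact sup_le (le_sup_of_le_right le_sup_left)
      (le_sup_of_le_left (genBEI_mono K m delVert_le))

theorem genBEI_intersection_internal_vertex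
    (K : Type) [Field K] (m : ℕ) (hm : 2 ≤ m) (V : Type) (G : SimpleGraph V) (v : V)
    (hv : ¬ IsLeafVert G v) :
    genBEI K m G = genBEI K m (addNbhdClique G v) ⊓
      (Ideal.span {f | ∃ i : Fin m, f = (X (i, v) : MvPolynomial (Fin m × V) K)} ⊔
        genBEI K m (delVert G v)) ∧
    genBEI K m (addNbhdClique G v) ⊔
      (Ideal.span {f | ∃ i : Fin m, f = (X (i, v) : MvPolynomial (Fin m × V) K)} ⊔
        genBEI K m (delVert G v)) =
    Ideal.span {f | ∃ i : Fin m, f = (X (i, v) : MvPolynomial (Fin m × V) K)} ⊔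
      genBEI K m (delVert (addNbhdClique G v) v) :=
  genBEI_intersection_internal_vertex_general K m V G v
end
end
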